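/- arXiv:2112.14304 — 8 statements merged into one kernel-verified Lean document; each statement's English description precedes it below -/
import Mathlib

section
/- Let p be a prime number, R a commutative ring, and ξ ∈ R a nilpotent element. Assume that every finitely generated p-torsion-free module over the quotient ring R/(ξ) is finitely presented as an R/(ξ)-module. Then every finitely generated p-torsion-free R-module is finitely presented as an R-module. -/
/-!
Induction on the order `k` with `ξ ^ k • M = 0`. Multiplication by `ξ` gives an exact sequence
`0 → M[ξ] → M → ξ M → 0` in which `ξ M` is killed by `ξ ^ (k - 1)` and is again `p`-torsion-free,
so it is finitely presented by induction. Then `M[ξ]` is finitely generated, being the kernel of a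
surjection from a finite module onto a finitely presented one; it is a `p`-torsion-free
`R ⧸ (ξ)`-module, hence finitely presented over `R ⧸ (ξ)`, and so over `R` because `R ⧸ (ξ)` is a
finitely presented `R`-module. An extension of finitely presented modules is finitely presented.
-/

universe u

open Submodule Module

section

variable {R : Type*} [CommRing R]

lemma Module.finitePresentation_quotient_of_fg {I : Ideal R} (hI : I.FG) :
    Module.FinitePresentation R (R ⧸ I) :=
  Module.finitePresentation_of_surjective I.mkQ I.mkQ_surjective (by rwa [Submodule.ker_mkQ])

section
variable {M : Type*} [AddCommGroup M] [Module R M] (a : R)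

lemma Module.finite_torsionBy_of_finitePresentation_range [Module.Finite R M]
    [Module.FinitePresentation R (LinearMap.range (DistribSMul.toLinearMap R M a))] :
    Module.Finite R (torsionBy R M a) :=
  .of_fg <| by
    have := Module.FinitePresentation.fg_ker _
      (DistribSMul.toLinearMap R M a).surjective_rangeRestrict
    rwa [LinearMap.ker_rangeRestrict] at this

lemma Module.finitePresentation_of_range_of_torsionBy
    [Module.FinitePresentation R (LinearMap.range (DistribSMul.toLinearMap R M a))]
    [Module.FinitePresentation (R ⧸ Ideal.span {a}) (torsionBy R M a)] :
    Module.FinitePresentation R M := by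
  have : Module.FinitePresentation R (R ⧸ Ideal.span {a}) :=
    Module.finitePresentation_quotient_of_fg (Submodule.fg_span_singleton a)
  have : Module.FinitePresentation R (torsionBy R M a) := .trans _ _ (R ⧸ Ideal.span {a})
  have : Module.FinitePresentation R
      (LinearMap.ker (DistribSMul.toLinearMap R M a).rangeRestrict) := by
    rwa [LinearMap.ker_rangeRestrict]
  exact Module.finitePresentation_of_ker _
    (DistribSMul.toLinearMap R M a).surjective_rangeRestrict

lemma Module.IsTorsionBy.range_smul {k : ℕ} (h : IsTorsionBy R M (a ^ (k + 1))) :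
    IsTorsionBy R (LinearMap.range (DistribSMul.toLinearMap R M a)) (a ^ k) := by
  rintro ⟨-, m, rfl⟩
  ext
  simpa [← smul_assoc, ← pow_succ] using @h m

lemma IsSMulRegular.torsionBy_mk {r : R} (h : IsSMulRegular M r) :
    IsSMulRegular (torsionBy R M a) (Ideal.Quotient.mk (Ideal.span {a}) r) := by
  rw [← Ideal.Quotient.algebraMap_eq, isSMulRegular_algebraMap_iff]
  exact h.submodule _ _

end

theorem Module.finitePresentation_of_isTorsionBy_pow (a r : R)
    (hquot : ∀ (N : Type u) [AddCommGroup N] [Module (R ⧸ Ideal.span {a}) N]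
      [Module.Finite (R ⧸ Ideal.span {a}) N],
      IsSMulRegular N (Ideal.Quotient.mk (Ideal.span {a}) r) →
      Module.FinitePresentation (R ⧸ Ideal.span {a}) N)
    (k : ℕ) (M : Type u) [AddCommGroup M] [Module R M] [Module.Finite R M]
    (hr : IsSMulRegular M r) (hk : IsTorsionBy R M (a ^ k)) :
    Module.FinitePresentation R M := by
  induction k generalizing M with
  | zero =>
    have : Subsingleton M := ⟨fun x y => by simpa using (@hk x).trans (@hk y).symm⟩
    infer_instance
  | succ k ih =>
    have : Module.FinitePresentation R (LinearMap.range (DistribSMul.toLinearMap R M a)) :=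
      ih _ (hr.submodule _ _) (hk.range_smul a)
    have : Module.Finite R (torsionBy R M a) := finite_torsionBy_of_finitePresentation_range a
    have : Module.Finite (R ⧸ Ideal.span {a}) (torsionBy R M a) :=
      .of_restrictScalars_finite R _ _
    have : Module.FinitePresentation (R ⧸ Ideal.span {a}) (torsionBy R M a) :=
      hquot _ (hr.torsionBy_mk a)
    exact finitePresentation_of_range_of_torsionBy a

end

theorem fg_pTorsionFree_finitePresentation_of_quotient_nilpotent_general
    (p : ℕ) (R : Type u) [CommRing R] (ξ : R) (hξ : IsNilpotent ξ)
    (hquot : ∀ (M : Type u) [AddCommGroup M] [Module (R ⧸ Ideal.span {ξ}) M],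
      Module.Finite (R ⧸ Ideal.span {ξ}) M →
      Function.Injective (fun m : M => (p : R ⧸ Ideal.span {ξ}) • m) →
      Module.FinitePresentation (R ⧸ Ideal.span {ξ}) M) :
    ∀ (M : Type u) [AddCommGroup M] [Module R M],
      Module.Finite R M →
      Function.Injective (fun m : M => (p : R) • m) →
      Module.FinitePresentation R M := by
  obtain ⟨e, he⟩ := hξ
  intro M _ _ _ hp
  refine Module.finitePresentation_of_isTorsionBy_pow ξ p (fun N _ _ hN hreg => ?_) e M hp
    fun m => by rw [he, zero_smul]
  rw [map_natCast] at hreg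
  exact hquot N hN hreg

/-- Let `p` be a prime, `R` a commutative ring and `ξ ∈ R` nilpotent.
If every finitely generated `p`-torsion-free module over `R ⧸ (ξ)` is finitely presented
over `R ⧸ (ξ)`, then every finitely generated `p`-torsion-free `R`-module is finitely
presented over `R`. -/
theorem fg_pTorsionFree_finitePresentation_of_quotient_nilpotent
    (p : ℕ) (hp : p.Prime) (R : Type u) [CommRing R] (ξ : R) (hξ : IsNilpotent ξ)
    (hquot : ∀ (M : Type u) [AddCommGroup M] [Module (R ⧸ Ideal.span {ξ}) M],
      Module.Finite (R ⧸ Ideal.span {ξ}) M →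
      Function.Injective (fun m : M => (p : R ⧸ Ideal.span {ξ}) • m) →
      Module.FinitePresentation (R ⧸ Ideal.span {ξ}) M) :
    ∀ (M : Type u) [AddCommGroup M] [Module R M],
      Module.Finite R M →
      Function.Injective (fun m : M => (p : R) • m) →
      Module.FinitePresentation R M :=
  fg_pTorsionFree_finitePresentation_of_quotient_nilpotent_general p R ξ hξ hquot
end

section
/- Let p be a prime number and R a commutative ring such that every finitely generated p-torsion-free R-module is finitely presented. Let N be a finitely generated R-module and N' ⊆ N a submodule. Then there exists an integer c ≥ 0 such that for every k ≥ c one has p^k N ∩ N' ⊆ p^{k−c} N'. In particular, the subspace topology on N' induced from the p-adic topology of N agrees with the p-adic topology of N'. -/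
open Pointwise

universe u

/-- Let `p` be a prime and `R` a commutative ring such that every finitely
generated `p`-torsion-free `R`-module is finitely presented.  For any finitely generated
`R`-module `N` and any submodule `N' ⊆ N`, there is a constant `c ≥ 0` such that
`p^k N ∩ N' ⊆ p^(k-c) N'` for all `k ≥ c` (Artin–Rees type statement; in particular the
subspace topology on `N'` induced from the `p`-adic topology of `N` agrees with the
`p`-adic topology of `N'`). -/
theorem exists_const_pow_smul_inf_le
    (p : ℕ) (hp : p.Prime) (R : Type u) [CommRing R]
    (HFP : ∀ (M : Type u) [AddCommGroup M] [Module R M],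
      Module.Finite R M →
      Function.Injective (fun m : M => (p : R) • m) →
      Module.FinitePresentation R M)
    (N : Type u) [AddCommGroup N] [Module R N] [Module.Finite R N]
    (N' : Submodule R N) :
    ∃ c : ℕ, ∀ k : ℕ, c ≤ k →
      ((p : R) ^ k • (⊤ : Submodule R N)) ⊓ N' ≤ (p : R) ^ (k - c) • N' := by
  classical
  set M := N ⧸ N' with hM
  -- the p-power torsion submodule of M
  set T : Submodule R M :=
    { carrier := {m | ∃ n : ℕ, (p : R) ^ n • m = 0}
      zero_mem' := ⟨0, smul_zero _⟩
      add_mem' := by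
        rintro x y ⟨n, hn⟩ ⟨m, hm⟩
        refine ⟨n + m, ?_⟩
        have h1 : (p : R) ^ (n + m) • x = 0 := by
          rw [pow_add, mul_comm, mul_smul, hn, smul_zero]
        have h2 : (p : R) ^ (n + m) • y = 0 := by
          rw [pow_add, mul_smul, hm, smul_zero]
        rw [smul_add, h1, h2, add_zero]
      smul_mem' := by
        rintro r x ⟨n, hn⟩
        exact ⟨n, by rw [smul_comm, hn, smul_zero]⟩ } with hTdef
  have memT : ∀ m : M, m ∈ T ↔ ∃ n : ℕ, (p : R) ^ n • m = 0 := fun m => Iff.rfl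
  -- M ⧸ T is finite and p-torsion-free
  have hfin : Module.Finite R (M ⧸ T) := Module.Finite.quotient R T
  have hinj : Function.Injective (fun m : M ⧸ T => (p : R) • m) := by
    intro a b hab
    obtain ⟨x, rfl⟩ := T.mkQ_surjective a
    obtain ⟨y, rfl⟩ := T.mkQ_surjective b
    simp only [← map_smul, Submodule.mkQ_apply] at hab
    obtain ⟨n, hn⟩ := (memT _).mp ((Submodule.Quotient.eq T).mp hab)
    have hxy : x - y ∈ T := by
      refine ⟨n + 1, ?_⟩
      have hn' : (p : R) ^ n • ((p : R) • x - (p : R) • y) = 0 := hn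
      rw [pow_succ, mul_smul, smul_sub]
      exact hn'
    simpa only [Submodule.mkQ_apply] using (Submodule.Quotient.eq T).mpr hxy
  haveI hfp : Module.FinitePresentation R (M ⧸ T) := HFP _ hfin hinj
  have hTfg : T.FG := by
    have := Module.FinitePresentation.fg_ker T.mkQ T.mkQ_surjective
    rwa [Submodule.ker_mkQ] at this
  obtain ⟨s, hs⟩ := hTfg
  -- choose a uniform exponent c killing the generators of T
  let f : M → ℕ := fun x => if h : ∃ n : ℕ, (p : R) ^ n • x = 0 then h.choose else 0
  set c := s.sup f with hc
  have hkill : ∀ m ∈ T, (p : R) ^ c • m = 0 := by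
    have hle : T ≤ LinearMap.ker (LinearMap.lsmul R M ((p : R) ^ c)) := by
      rw [← hs, Submodule.span_le]
      intro x hx
      have hxT : x ∈ T := by rw [← hs]; exact Submodule.subset_span hx
      obtain ⟨n, hn⟩ := (memT x).mp hxT
      have hex : ∃ n : ℕ, (p : R) ^ n • x = 0 := ⟨n, hn⟩
      have hchoose : (p : R) ^ (f x) • x = 0 := by
        simpa only [f, dif_pos hex] using hex.choose_spec
      have hfx : f x ≤ c := Finset.le_sup hx
      have : (p : R) ^ c • x = 0 := by
        rw [← Nat.sub_add_cancel hfx, pow_add, mul_smul, hchoose, smul_zero]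
      simpa using this
    intro m hm
    simpa using hle hm
  refine ⟨c, fun k hk x hx => ?_⟩
  obtain ⟨hx1, hx2⟩ := hx
  obtain ⟨y, -, rfl⟩ := hx1
  -- y : N with x = p^k • y ∈ N'
  have hyT : (Submodule.Quotient.mk y : M) ∈ T := by
    refine ⟨k, ?_⟩
    rw [← Submodule.Quotient.mk_smul, Submodule.Quotient.mk_eq_zero]
    exact hx2
  have hyc : (p : R) ^ c • y ∈ N' := by
    have := hkill _ hyT
    rw [← Submodule.Quotient.mk_smul, Submodule.Quotient.mk_eq_zero] at this
    exact this
  have key : (p : R) ^ k • y = (p : R) ^ (k - c) • ((p : R) ^ c • y) := by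
    rw [← mul_smul, ← pow_add, Nat.sub_add_cancel hk]
  show (p : R) ^ k • y ∈ (p : R) ^ (k - c) • N'
  rw [key]
  exact Submodule.smul_mem_pointwise_smul _ _ _ hyc
end

section
/- Let p be a prime number and R a commutative ring that is p-adically complete and separated (the canonical map R → lim_n R/p^nR is bijective) and such that every finitely generated p-torsion-free R-module is finitely presented. Then every finitely generated R-module M is p-adically complete and separated, i.e., the canonical map M → lim_n M/p^nM is bijective. -/
universe u

open Submodule Function

section Aux

variable {R : Type u} [CommRing R]

open scoped Pointwise in
lemma mem_span_pow_smul_top {M : Type*} [AddCommGroup M] [Module R M]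
    (a : R) (n : ℕ) (x : M) :
    x ∈ (Ideal.span {a} ^ n • ⊤ : Submodule R M) ↔ ∃ m : M, a ^ n • m = x := by
  rw [Ideal.span_singleton_pow, Submodule.ideal_span_singleton_smul]
  constructor
  · intro hx
    rw [← SetLike.mem_coe, Submodule.coe_pointwise_smul] at hx
    obtain ⟨m, -, hm⟩ := Set.mem_smul_set.mp hx
    exact ⟨m, hm⟩
  · rintro ⟨m, rfl⟩
    exact Submodule.smul_mem_pointwise_smul m (a ^ n) ⊤ trivial

lemma isPrecomplete_of_finite' (a : R) [IsPrecomplete (Ideal.span {a}) R]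
    (M : Type u) [AddCommGroup M] [Module R M] [Module.Finite R M] :
    IsPrecomplete (Ideal.span {a}) M := by
  obtain ⟨k, π, hπ⟩ := Module.Finite.exists_fin' R M
  constructor
  intro f hf
  -- choose increments
  have hd : ∀ n : ℕ, ∃ u : Fin k → R, a ^ n • π u = f (n + 1) - f n := by
    intro n
    have h1 : f n - f (n + 1) ∈ (Ideal.span {a} ^ n • ⊤ : Submodule R M) :=
      SModEq.sub_mem.mp (hf (Nat.le_succ n))
    obtain ⟨m, hm⟩ := (mem_span_pow_smul_top a n _).mp h1
    obtain ⟨u, hu⟩ := hπ (-m)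
    exact ⟨u, by rw [hu, smul_neg, hm, neg_sub]⟩
  choose u hu using hd
  obtain ⟨u0, hu0⟩ := hπ (f 0)
  set g : ℕ → (Fin k → R) := fun n => u0 + ∑ i ∈ Finset.range n, a ^ i • u i with hg
  have hπg : ∀ n, π (g n) = f n := by
    intro n
    induction n with
    | zero => simp [hg, hu0]
    | succ n ih =>
      have : g (n + 1) = g n + a ^ n • u n := by
        simp [hg, Finset.sum_range_succ, add_assoc]
      rw [this, map_add, ih, map_smul, hu n]
      abel
  -- g is Cauchy componentwise
  have hgc : ∀ {m n : ℕ}, m ≤ n → ∃ c : Fin k → R, a ^ m • c = g n - g m := by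
    intro m n hmn
    have : g n - g m = ∑ i ∈ Finset.Ico m n, a ^ i • u i := by
      simp only [hg, add_sub_add_left_eq_sub]
      rw [← Finset.sum_Ico_eq_sub _ hmn]
    refine ⟨∑ i ∈ Finset.Ico m n, a ^ (i - m) • u i, ?_⟩
    rw [this, Finset.smul_sum]
    refine Finset.sum_congr rfl fun i hi => ?_
    rw [Finset.mem_Ico] at hi
    rw [smul_smul, ← pow_add]
    congr 2
    omega
  have hcomp : ∀ j : Fin k, ∃ L : R,
      ∀ n, g n j ≡ L [SMOD (Ideal.span {a} ^ n • ⊤ : Submodule R R)] := by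
    intro j
    refine IsPrecomplete.prec inferInstance ?_
    intro m n hmn
    obtain ⟨c, hc⟩ := hgc hmn
    rw [SModEq.sub_mem]
    refine (mem_span_pow_smul_top a m _).mpr ⟨-c j, ?_⟩
    have := congrFun hc j
    simp only [Pi.smul_apply, Pi.sub_apply, smul_eq_mul] at this ⊢
    rw [mul_neg, this]
    ring
  choose L hL using hcomp
  refine ⟨π L, fun n => ?_⟩
  have hLg : ∃ c : Fin k → R, a ^ n • c = L - g n := by
    have : ∀ j : Fin k, ∃ c : R, a ^ n • c = L j - g n j := by
      intro j
      have := SModEq.sub_mem.mp (hL j n).symm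
      obtain ⟨c, hc⟩ := (mem_span_pow_smul_top a n _).mp this
      exact ⟨c, hc⟩
    choose c hc using this
    exact ⟨c, funext fun j => hc j⟩
  obtain ⟨c, hc⟩ := hLg
  rw [SModEq.sub_mem]
  refine (mem_span_pow_smul_top a n _).mpr ⟨π (-c), ?_⟩
  rw [map_neg, smul_neg, ← map_smul, hc, map_sub, hπg, neg_sub]

/-- Hausdorff-ness of the intersection for torsion-free finitely generated modules. -/
lemma eq_zero_of_tf (a : R) [IsAdicComplete (Ideal.span {a}) R]
    (HFP : ∀ (P : Type u) [AddCommGroup P] [Module R P],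
      Module.Finite R P →
      Function.Injective (fun m : P => a • m) →
      Module.FinitePresentation R P)
    (M : Type u) [AddCommGroup M] [Module R M] [Module.Finite R M]
    (htf : Function.Injective (fun m : M => a • m))
    (x : M) (hx : ∀ n : ℕ, ∃ m, a ^ n • m = x) : x = 0 := by
  set N : Submodule R M := ⨅ n : ℕ, (Ideal.span {a} ^ n • ⊤ : Submodule R M) with hN
  have hmemN : ∀ y : M, y ∈ N ↔ ∀ n, ∃ m, a ^ n • m = y := by
    intro y
    simp only [hN, Submodule.mem_iInf, mem_span_pow_smul_top]
  have hstep : ∀ y ∈ N, ∃ z ∈ N, a • z = y := by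
    intro y hy
    rw [hmemN] at hy
    obtain ⟨m1, hm1⟩ := hy 1
    rw [pow_one] at hm1
    refine ⟨m1, (hmemN m1).mpr fun n => ?_, hm1⟩
    obtain ⟨m2, hm2⟩ := hy (n + 1)
    refine ⟨m2, htf ?_⟩
    show a • (a ^ n • m2) = a • m1
    rw [smul_smul, ← pow_succ', hm2, hm1]
  -- M ⧸ N is torsion-free
  have hqtf : Function.Injective (fun m : M ⧸ N => a • m) := by
    have h0 : ∀ m : M ⧸ N, a • m = 0 → m = 0 := by
      intro m hm
      obtain ⟨y, rfl⟩ := Submodule.Quotient.mk_surjective N m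
      rw [← Submodule.Quotient.mk_smul, Submodule.Quotient.mk_eq_zero] at hm
      obtain ⟨z, hz, hza⟩ := hstep _ hm
      have : y = z := htf (by simpa using hza.symm)
      rw [Submodule.Quotient.mk_eq_zero, this]
      exact hz
    intro x y hxy
    have : a • (x - y) = 0 := by
      simp only at hxy
      rw [smul_sub, hxy, sub_self]
    have := h0 _ this
    exact sub_eq_zero.mp this
  have hfp : Module.FinitePresentation R (M ⧸ N) := HFP _ inferInstance hqtf
  have hNfg : N.FG := by
    have := Module.FinitePresentation.fg_ker N.mkQ N.mkQ_surjective
    rwa [Submodule.ker_mkQ] at this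
  have hle : N ≤ Ideal.span {a} • N := by
    intro y hy
    obtain ⟨z, hz, rfl⟩ := hstep y hy
    exact Submodule.smul_mem_smul (Ideal.mem_span_singleton_self a) hz
  have hbot : N = ⊥ :=
    Submodule.eq_bot_of_le_smul_of_le_jacobson_bot (Ideal.span {a}) N hNfg hle
      (IsAdicComplete.le_jacobson_bot _)
  have : x ∈ N := (hmemN x).mpr hx
  rwa [hbot, Submodule.mem_bot] at this

lemma isHausdorff_of_finite' (a : R) [IsAdicComplete (Ideal.span {a}) R]
    (HFP : ∀ (P : Type u) [AddCommGroup P] [Module R P],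
      Module.Finite R P →
      Function.Injective (fun m : P => a • m) →
      Module.FinitePresentation R P)
    (M : Type u) [AddCommGroup M] [Module R M] [Module.Finite R M] :
    IsHausdorff (Ideal.span {a}) M := by
  set T : Submodule R M := Submodule.torsion' R M (Submonoid.powers a) with hT
  have hmemT : ∀ y : M, y ∈ T ↔ ∃ n : ℕ, a ^ n • y = 0 := by
    intro y
    rw [hT, Submodule.mem_torsion'_iff]
    constructor
    · rintro ⟨⟨s, n, rfl⟩, hs⟩
      exact ⟨n, hs⟩
    · rintro ⟨n, hn⟩
      exact ⟨⟨a ^ n, n, rfl⟩, hn⟩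
  -- the quotient is torsion-free
  have hqtf : Function.Injective (fun m : M ⧸ T => a • m) := by
    have h0 : ∀ m : M ⧸ T, a • m = 0 → m = 0 := by
      intro m hm
      obtain ⟨y, rfl⟩ := Submodule.Quotient.mk_surjective T m
      rw [← Submodule.Quotient.mk_smul, Submodule.Quotient.mk_eq_zero] at hm
      rw [Submodule.Quotient.mk_eq_zero]
      obtain ⟨n, hn⟩ := (hmemT _).mp hm
      refine (hmemT y).mpr ⟨n + 1, ?_⟩
      rw [pow_succ, mul_smul]
      exact hn
    intro x y hxy
    have : a • (x - y) = 0 := by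
      simp only at hxy
      rw [smul_sub, hxy, sub_self]
    exact sub_eq_zero.mp (h0 _ this)
  have hfp : Module.FinitePresentation R (M ⧸ T) := HFP _ inferInstance hqtf
  have hTfg : T.FG := by
    have := Module.FinitePresentation.fg_ker T.mkQ T.mkQ_surjective
    rwa [Submodule.ker_mkQ] at this
  -- T is annihilated by a fixed power of a
  obtain ⟨s, hs⟩ := hTfg
  have hbound : ∃ k : ℕ, ∀ y ∈ T, a ^ k • y = 0 := by
    have hgen : ∀ t : M, ∃ n : ℕ, t ∈ s → a ^ n • t = 0 := by
      intro t
      by_cases ht : t ∈ s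
      · have : t ∈ T := hs ▸ Submodule.subset_span ht
        obtain ⟨n, hn⟩ := (hmemT t).mp this
        exact ⟨n, fun _ => hn⟩
      · exact ⟨0, fun h => absurd h ht⟩
    choose nf hnf using hgen
    refine ⟨s.sup nf, fun y hy => ?_⟩
    have : T ≤ Submodule.torsionBy R M (a ^ s.sup nf) := by
      rw [← hs, Submodule.span_le]
      intro t ht
      rw [SetLike.mem_coe, Submodule.mem_torsionBy_iff]
      have h1 : nf t ≤ s.sup nf := Finset.le_sup ht
      rw [← Nat.sub_add_cancel h1, pow_add, mul_smul, hnf t ht, smul_zero]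
    exact (Submodule.mem_torsionBy_iff _ _).mp (this hy)
  obtain ⟨k, hk⟩ := hbound
  constructor
  intro x hx
  have hx' : ∀ n : ℕ, ∃ m : M, a ^ n • m = x := by
    intro n
    exact (mem_span_pow_smul_top a n x).mp (SModEq.zero.mp (hx n))
  -- the image of x in M ⧸ T is zero
  have hxT : x ∈ T := by
    have hq : (Submodule.Quotient.mk x : M ⧸ T) = 0 := by
      refine eq_zero_of_tf a HFP (M ⧸ T) hqtf _ fun n => ?_
      obtain ⟨m, hm⟩ := hx' n
      exact ⟨Submodule.Quotient.mk m, by rw [← Submodule.Quotient.mk_smul, hm]⟩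
    rwa [Submodule.Quotient.mk_eq_zero] at hq
  obtain ⟨m, hm⟩ := hx' (k + 1)
  have hmT : m ∈ T := by
    refine (hmemT m).mpr ⟨2 * k + 1, ?_⟩
    have h1 : a ^ k • x = 0 := hk x hxT
    have : a ^ k • (a ^ (k + 1) • m) = 0 := by rw [hm, h1]
    rwa [smul_smul, ← pow_add, show k + (k + 1) = 2 * k + 1 by ring] at this
  have h2 : a ^ k • m = 0 := hk m hmT
  rw [← hm, pow_succ', mul_smul, h2, smul_zero]

end Aux

/-- Let `p` be a prime and `R` a commutative ring that is `p`-adically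
complete and separated (i.e. `R → lim_n R/p^nR` is bijective, phrased as `IsAdicComplete`)
and such that every finitely generated `p`-torsion-free `R`-module is finitely presented.
Then every finitely generated `R`-module is `p`-adically complete and separated. -/
theorem isAdicComplete_of_finite
    (p : ℕ) (hp : p.Prime) (R : Type u) [CommRing R]
    [IsAdicComplete (Ideal.span {(p : R)}) R]
    (HFP : ∀ (M : Type u) [AddCommGroup M] [Module R M],
      Module.Finite R M →
      Function.Injective (fun m : M => (p : R) • m) →
      Module.FinitePresentation R M)
    (M : Type u) [AddCommGroup M] [Module R M] [Module.Finite R M] :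
    IsAdicComplete (Ideal.span {(p : R)}) M :=
  { toIsHausdorff := isHausdorff_of_finite' (p : R) HFP M
    toIsPrecomplete := isPrecomplete_of_finite' (p : R) M }
end

section
/- Let p be a prime number and R a commutative ring that is p-adically complete and separated (the canonical map R → lim_n R/p^nR is bijective) and such that every finitely generated p-torsion-free R-module is finitely presented. Then for every r ∈ ℕ and every submodule N of the finite free module R^r, one has ⋂_{k≥0} (N + p^k·R^r) = N; that is, every submodule of a finite free R-module is closed for the p-adic topology of R^r. -/
open Pointwise

universe u

section Aux

variable {R : Type u} [CommRing R]

private lemma mem_psmul_top_iff {M : Type u} [AddCommGroup M] [Module R M] (a : R) (x : M) :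
    x ∈ a • (⊤ : Submodule R M) ↔ ∃ y : M, a • y = x := by
  constructor
  · rintro ⟨y, -, rfl⟩
    exact ⟨y, rfl⟩
  · rintro ⟨y, rfl⟩
    exact Submodule.smul_mem_pointwise_smul y a ⊤ trivial

/-- The submodule of `p`-power torsion elements. -/
private def pTors (p : ℕ) (R : Type u) [CommRing R] (M : Type u) [AddCommGroup M]
    [Module R M] : Submodule R M where
  carrier := {x | ∃ n : ℕ, (p : R) ^ n • x = 0}
  zero_mem' := ⟨0, smul_zero _⟩
  add_mem' := by
    rintro a b ⟨n, hn⟩ ⟨m, hm⟩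
    refine ⟨n + m, ?_⟩
    have ha : (p : R) ^ (n + m) • a = 0 := by
      rw [pow_add, mul_comm, mul_smul, hn, smul_zero]
    have hb : (p : R) ^ (n + m) • b = 0 := by
      rw [pow_add, mul_smul, hm, smul_zero]
    rw [smul_add, ha, hb, add_zero]
  smul_mem' := by
    rintro c x ⟨n, hn⟩
    exact ⟨n, by rw [smul_comm, hn, smul_zero]⟩

private lemma mem_pTors_iff {p : ℕ} {M : Type u} [AddCommGroup M] [Module R M] (x : M) :
    x ∈ pTors p R M ↔ ∃ n : ℕ, (p : R) ^ n • x = 0 := Iff.rfl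

private lemma smul_inj_of (p : ℕ) {M : Type u} [AddCommGroup M] [Module R M]
    (h : ∀ x : M, (p : R) • x = 0 → x = 0) :
    Function.Injective (fun m : M => (p : R) • m) := by
  intro a b hab
  have hab' : (p : R) • a = (p : R) • b := hab
  have h0 : (p : R) • (a - b) = 0 := by rw [smul_sub, hab', sub_self]
  have := h _ h0
  rwa [sub_eq_zero] at this

private lemma pow_smul_eq_zero_imp (p : ℕ) {M : Type u} [AddCommGroup M] [Module R M]
    (hinj : Function.Injective (fun m : M => (p : R) • m)) :
    ∀ (c : ℕ) (x : M), (p : R) ^ c • x = 0 → x = 0 := by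
  intro c
  induction c with
  | zero => intro x hx; simpa using hx
  | succ d ih =>
    intro x hx
    have : (p : R) • x = 0 := by
      apply ih
      rw [← hx, pow_succ, mul_smul]
    have h2 : (fun m : M => (p : R) • m) x = (fun m : M => (p : R) • m) 0 := by
      simpa [smul_zero] using this
    exact hinj h2

/-- In a `p`-torsion-free module, `⨅ k, p^k • ⊤ = ⊥`, given completeness and the
finite-presentation hypothesis. -/
private lemma iInf_smul_top_eq_bot_of_torsionFree
    (p : ℕ) [IsAdicComplete (Ideal.span {(p : R)}) R]
    (HFP : ∀ (M : Type u) [AddCommGroup M] [Module R M],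
      Module.Finite R M →
      Function.Injective (fun m : M => (p : R) • m) →
      Module.FinitePresentation R M)
    (M : Type u) [AddCommGroup M] [Module R M] (hM : Module.Finite R M)
    (hinj : Function.Injective (fun m : M => (p : R) • m)) :
    (⨅ k : ℕ, (p : R) ^ k • (⊤ : Submodule R M)) = ⊥ := by
  have hpinj : ∀ (a b : M), (p : R) • a = (p : R) • b → a = b := fun a b h => hinj h
  set K : Submodule R M := ⨅ k : ℕ, (p : R) ^ k • (⊤ : Submodule R M) with hK
  have hKmem : ∀ x, x ∈ K ↔ ∀ k : ℕ, ∃ y : M, (p : R) ^ k • y = x := by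
    intro x
    rw [hK, Submodule.mem_iInf]
    exact forall_congr' fun k => mem_psmul_top_iff _ _
  -- every element of K is p • (element of K)
  have hdiv : ∀ x ∈ K, ∃ y ∈ K, x = (p : R) • y := by
    intro x hx
    rw [hKmem] at hx
    choose y hy using hx
    refine ⟨y 1, ?_, ?_⟩
    · rw [hKmem]
      intro k
      refine ⟨y (k + 1), ?_⟩
      apply hpinj
      calc (p : R) • (p : R) ^ k • y (k + 1) = (p : R) ^ (k + 1) • y (k + 1) := by
            rw [← mul_smul, ← pow_succ']
        _ = x := hy (k + 1)
        _ = (p : R) • y 1 := by rw [← hy 1, pow_one]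
    · rw [← hy 1, pow_one]
  -- K ≤ (p) • K
  have hle : K ≤ Ideal.span {(p : R)} • K := by
    intro x hx
    obtain ⟨y, hyK, rfl⟩ := hdiv x hx
    exact Submodule.smul_mem_smul (Ideal.mem_span_singleton_self _) hyK
  -- M ⧸ K is p-torsion-free
  have hquotinj : Function.Injective (fun m : M ⧸ K => (p : R) • m) := by
    apply smul_inj_of
    intro x h0
    obtain ⟨m, rfl⟩ := Submodule.mkQ_surjective K x
    have hm : (p : R) • m ∈ K := by
      rwa [← map_smul, Submodule.mkQ_apply, Submodule.Quotient.mk_eq_zero] at h0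
    have hmK : m ∈ K := by
      rw [hKmem] at hm ⊢
      intro k
      obtain ⟨z, hz⟩ := hm (k + 1)
      refine ⟨z, hpinj _ _ ?_⟩
      rw [← hz, ← mul_smul, ← pow_succ']
    exact (Submodule.Quotient.mk_eq_zero K).2 hmK
  have hquotfin : Module.Finite R (M ⧸ K) :=
    Module.Finite.of_surjective K.mkQ (Submodule.mkQ_surjective K)
  have hfp : Module.FinitePresentation R (M ⧸ K) := HFP _ hquotfin hquotinj
  have hfg : K.FG := by
    have := Module.FinitePresentation.fg_ker K.mkQ (Submodule.mkQ_surjective K)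
    rwa [Submodule.ker_mkQ] at this
  exact Submodule.eq_bot_of_le_smul_of_le_jacobson_bot (Ideal.span {(p : R)}) K hfg hle
    (IsAdicComplete.le_jacobson_bot _)

/-- For any finitely generated module `M`, `⨅ k, p^k • ⊤ = ⊥`. -/
private lemma iInf_smul_top_eq_bot
    (p : ℕ) [IsAdicComplete (Ideal.span {(p : R)}) R]
    (HFP : ∀ (M : Type u) [AddCommGroup M] [Module R M],
      Module.Finite R M →
      Function.Injective (fun m : M => (p : R) • m) →
      Module.FinitePresentation R M)
    (M : Type u) [AddCommGroup M] [Module R M] (hM : Module.Finite R M) :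
    (⨅ k : ℕ, (p : R) ^ k • (⊤ : Submodule R M)) = ⊥ := by
  classical
  set T : Submodule R M := pTors p R M with hT
  -- M ⧸ T is p-torsion-free
  have hquotinj : Function.Injective (fun m : M ⧸ T => (p : R) • m) := by
    apply smul_inj_of
    intro x h0
    obtain ⟨m, rfl⟩ := Submodule.mkQ_surjective T x
    have hm : (p : R) • m ∈ T := by
      rwa [← map_smul, Submodule.mkQ_apply, Submodule.Quotient.mk_eq_zero] at h0
    rw [hT, mem_pTors_iff] at hm
    obtain ⟨n, hn⟩ := hm
    have hmT : m ∈ T := by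
      rw [hT, mem_pTors_iff]
      exact ⟨n + 1, by rw [pow_succ, mul_smul]; exact hn⟩
    exact (Submodule.Quotient.mk_eq_zero T).2 hmT
  have hquotfin : Module.Finite R (M ⧸ T) :=
    Module.Finite.of_surjective T.mkQ (Submodule.mkQ_surjective T)
  have hfp : Module.FinitePresentation R (M ⧸ T) := HFP _ hquotfin hquotinj
  have hTfg : T.FG := by
    have := Module.FinitePresentation.fg_ker T.mkQ (Submodule.mkQ_surjective T)
    rwa [Submodule.ker_mkQ] at this
  -- T is killed by a single power of p
  obtain ⟨s, hs⟩ := hTfg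
  have hgen : ∀ g : M, g ∈ (s : Set M) → ∃ n : ℕ, (p : R) ^ n • g = 0 := by
    intro g hg
    have hgT : g ∈ T := hs ▸ Submodule.subset_span hg
    rw [hT, mem_pTors_iff] at hgT
    exact hgT
  choose! n hn using hgen
  set c : ℕ := s.sup n with hc
  have hkill : ∀ x ∈ T, (p : R) ^ c • x = 0 := by
    have : T ≤ LinearMap.ker (LinearMap.lsmul R M ((p : R) ^ c)) := by
      rw [← hs, Submodule.span_le]
      intro g hg
      simp only [SetLike.mem_coe, LinearMap.mem_ker, LinearMap.lsmul_apply]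
      have hng : n g ≤ c := Finset.le_sup hg
      calc (p : R) ^ c • g = (p : R) ^ (c - n g) • (p : R) ^ (n g) • g := by
            rw [← mul_smul, ← pow_add, Nat.sub_add_cancel hng]
        _ = 0 := by rw [hn g hg, smul_zero]
    intro x hx
    exact this hx
  -- the torsion-free quotient has trivial intersection
  have hbot : (⨅ k : ℕ, (p : R) ^ k • (⊤ : Submodule R (M ⧸ T))) = ⊥ :=
    iInf_smul_top_eq_bot_of_torsionFree p HFP (M ⧸ T) hquotfin hquotinj
  -- now finish
  rw [eq_bot_iff]
  intro x hx
  rw [Submodule.mem_iInf] at hx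
  simp only [mem_psmul_top_iff] at hx
  -- the image of x in M ⧸ T is in the infimum, hence zero; moreover x = p^c • m with m ∈ T
  obtain ⟨m, hm⟩ := hx c
  have hmT : m ∈ T := by
    have hximg : T.mkQ x ∈ (⨅ k : ℕ, (p : R) ^ k • (⊤ : Submodule R (M ⧸ T))) := by
      rw [Submodule.mem_iInf]
      intro k
      obtain ⟨y, hy⟩ := hx k
      rw [mem_psmul_top_iff]
      exact ⟨T.mkQ y, by rw [← map_smul, hy]⟩
    rw [hbot, Submodule.mem_bot] at hximg
    -- p^c • mkQ m = mkQ x = 0, so mkQ m = 0 by torsion-freeness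
    have h1 : (p : R) ^ c • T.mkQ m = 0 := by
      rw [← map_smul, hm, hximg]
    have h2 : T.mkQ m = 0 := pow_smul_eq_zero_imp p hquotinj c _ h1
    rwa [Submodule.mkQ_apply, Submodule.Quotient.mk_eq_zero] at h2
  rw [Submodule.mem_bot, ← hm]
  exact hkill m hmT

end Aux

/-- Let `p` be a prime and `R` a commutative ring that is `p`-adically
complete and separated, and such that every finitely generated `p`-torsion-free `R`-module
is finitely presented.  Then every submodule `N` of a finite free module `R^r` is closed
for the `p`-adic topology: `⋂_k (N + p^k R^r) = N`. -/
theorem submodule_closed_in_pi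
    (p : ℕ) (hp : p.Prime) (R : Type u) [CommRing R]
    [IsAdicComplete (Ideal.span {(p : R)}) R]
    (HFP : ∀ (M : Type u) [AddCommGroup M] [Module R M],
      Module.Finite R M →
      Function.Injective (fun m : M => (p : R) • m) →
      Module.FinitePresentation R M)
    (r : ℕ) (N : Submodule R (Fin r → R)) :
    (⨅ k : ℕ, N ⊔ (p : R) ^ k • (⊤ : Submodule R (Fin r → R))) = N := by
  have hfin : Module.Finite R ((Fin r → R) ⧸ N) :=
    Module.Finite.of_surjective N.mkQ (Submodule.mkQ_surjective N)
  have hbot : (⨅ k : ℕ, (p : R) ^ k • (⊤ : Submodule R ((Fin r → R) ⧸ N))) = ⊥ :=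
    iInf_smul_top_eq_bot p HFP _ hfin
  have hcomap : ∀ k : ℕ, N ⊔ (p : R) ^ k • (⊤ : Submodule R (Fin r → R))
      = Submodule.comap N.mkQ ((p : R) ^ k • (⊤ : Submodule R ((Fin r → R) ⧸ N))) := by
    intro k
    have h1 : ((p : R) ^ k • (⊤ : Submodule R (Fin r → R))).map N.mkQ
        = (p : R) ^ k • (⊤ : Submodule R ((Fin r → R) ⧸ N)) := by
      rw [Submodule.map_pointwise_smul, Submodule.map_top, Submodule.range_mkQ]
    rw [← h1, Submodule.comap_map_mkQ]
  calc (⨅ k : ℕ, N ⊔ (p : R) ^ k • (⊤ : Submodule R (Fin r → R)))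
      = ⨅ k : ℕ, Submodule.comap N.mkQ ((p : R) ^ k • (⊤ : Submodule R ((Fin r → R) ⧸ N))) := by
        exact iInf_congr hcomap
    _ = Submodule.comap N.mkQ (⨅ k : ℕ, (p : R) ^ k • (⊤ : Submodule R ((Fin r → R) ⧸ N))) :=
        (Submodule.comap_iInf _ _).symm
    _ = N := by rw [hbot, Submodule.comap_bot, Submodule.ker_mkQ]
end

section
/- Let p be a prime number and R a commutative p-torsion-free ring such that every finitely generated p-torsion-free R-module is finitely presented. Let F be a flat R-module. Then the p-adic completion F^∧ = lim_n F/p^nF is a flat R-module and is p-torsion-free. -/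
/-!
By the equational criterion it suffices to show that every relation `∑ fᵢ • xᵢ = 0` in `F^∧`
is trivial. Let `J = (f₁, …, fₙ)` and let `J : p^∞` be its saturation. Both `J` and
`R ⧸ (J : p^∞)` are finitely generated and `p`-torsion-free, hence finitely presented: so the
syzygies of `f` are generated by finitely many `sⱼ`, and `p ^ c • (J : p^∞) ⊆ J` for some `c`.
Flatness of `F` then shows that every `v : ι → F` with `∑ fᵢ • vᵢ ∈ p ^ (c + k) F` is a
combination of the syzygies modulo `p ^ k`. As `F` is `p`-torsion-free, this corrects
approximations of `x` one `p`-adic digit at a time, so `x` is a combination of the syzygies in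
`F^∧`, i.e. the relation is trivial. Torsion-freeness passes from `F` to `F^∧` directly.
-/

universe u

open Submodule

variable {R : Type*} [CommRing R] {M : Type*} [AddCommGroup M] [Module R M]

theorem mem_span_singleton_pow_smul_top_iff {r : R} {k : ℕ} {x : M} :
    x ∈ (Ideal.span {r} ^ k • ⊤ : Submodule R M) ↔ ∃ y, x = r ^ k • y := by
  simp [Ideal.span_singleton_pow, ideal_span_singleton_smul, mem_smul_pointwise_iff_exists,
    eq_comm]

theorem IsSMulRegular.adicCompletion {r : R} (h : IsSMulRegular M r) :
    IsSMulRegular (AdicCompletion (Ideal.span {r}) M) r := by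
  refine isSMulRegular_iff_right_eq_zero_of_smul.mpr fun z hz ↦ ?_
  induction z using AdicCompletion.induction_on with | h a => ?_
  have hra (n : ℕ) : ∃ y, r • a n = r ^ n • y := by
    rw [← mem_span_singleton_pow_smul_top_iff, ← Submodule.Quotient.mk_eq_zero]
    exact congr(($hz).val n)
  refine AdicCompletion.mk_zero_of _ _ _ ⟨0, fun n _ ↦ ⟨n + 1, by lia, n, le_rfl, ?_⟩⟩
  obtain ⟨y, hy⟩ := hra (n + 1)
  rw [pow_succ', mul_smul] at hy
  exact mem_span_singleton_pow_smul_top_iff.mpr ⟨y, h hy⟩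

def smulSum {ι : Type*} [Fintype ι] (f : ι → R) : (ι → M) →ₗ[R] M :=
  ∑ i, f i • LinearMap.proj i

@[simp]
theorem smulSum_apply {ι : Type*} [Fintype ι] (f : ι → R) (v : ι → M) :
    smulSum f v = ∑ i, f i • v i := by
  simp [smulSum]

namespace AdicCompletion

theorem exists_adicCauchySequence_of_forall_exists_add {I : Ideal R} {Q : ℕ → M → Prop}
    {x₀ : M} (h₀ : Q 0 x₀)
    (hstep : ∀ k x, Q k x → ∃ d ∈ (I ^ k • ⊤ : Submodule R M), Q (k + 1) (x + d)) :
    ∃ a : AdicCauchySequence I M, ∀ k, Q k (a k) := by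
  choose d hd hQ using hstep
  let a (k : ℕ) : {x // Q k x} := Nat.rec ⟨x₀, h₀⟩ (fun k x ↦ ⟨x + d k x x.2, hQ k x x.2⟩) k
  refine ⟨AdicCauchySequence.mk I M (fun k ↦ (a k).1) fun k ↦ ?_, fun k ↦ (a k).2⟩
  rw [SModEq.sub_mem]
  simpa [a] using hd k _ (a k).2

theorem map_smulSum (I : Ideal R) {ι : Type*} [Fintype ι] (f : ι → R)
    (x : AdicCompletion I (ι → M)) :
    map I (smulSum f) x = ∑ i, f i • map I (LinearMap.proj i) x := by
  induction x using induction_on with | h a => ?_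
  ext n
  simp [smulSum, val_sum_apply, val_smul_apply]

section Approximation

variable {N P : Type*} [AddCommGroup N] [Module R N] [AddCommGroup P] [Module R P]
  {q : R} {G : N →ₗ[R] M} {φ : M →ₗ[R] P} {c : ℕ}

theorem exists_map_add_smodEq_pow_succ (hφG : φ ∘ₗ G = 0) (hP : IsSMulRegular P q)
    (hc : ∀ v u, φ v = q ^ (c + 1) • u → ∃ b w, v = G b + q • w)
    {k : ℕ} {y : M} {b : N} (hb : G b ≡ y [SMOD (Ideal.span {q} ^ k • ⊤ : Submodule R M)])
    (hy : φ y ∈ (Ideal.span {q} ^ (c + k + 1) • ⊤ : Submodule R P)) :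
    ∃ d ∈ (Ideal.span {q} ^ k • ⊤ : Submodule R N),
      G (b + d) ≡ y [SMOD (Ideal.span {q} ^ (k + 1) • ⊤ : Submodule R M)] := by
  obtain ⟨e, he⟩ := mem_span_singleton_pow_smul_top_iff.mp (SModEq.sub_mem.mp hb.symm)
  obtain ⟨u, hu⟩ := mem_span_singleton_pow_smul_top_iff.mp hy
  have hφe : φ e = q ^ (c + 1) • u := by
    apply hP.pow k
    have hφGb : φ (G b) = 0 := LinearMap.congr_fun hφG b
    simp only [← map_smul, ← he, map_sub, hφGb, sub_zero, hu, smul_smul, ← pow_add]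
    ring_nf
  obtain ⟨d, w, rfl⟩ := hc e u hφe
  refine ⟨q ^ k • d, mem_span_singleton_pow_smul_top_iff.mpr ⟨d, rfl⟩, SModEq.sub_mem.mpr ?_⟩
  refine mem_span_singleton_pow_smul_top_iff.mpr ⟨-w, ?_⟩
  rw [map_add, map_smul, add_sub_right_comm, ← neg_sub, he]
  simp only [smul_add, pow_succ, mul_smul, smul_neg]
  abel

theorem map_exact_of_forall_eq_add_smul (hφG : φ ∘ₗ G = 0) (hP : IsSMulRegular P q)
    (hc : ∀ v u, φ v = q ^ (c + 1) • u → ∃ b w, v = G b + q • w) :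
    Function.Exact (map (Ideal.span {q}) G) (map (Ideal.span {q}) φ) := by
  refine LinearMap.exact_of_comp_eq_zero_of_ker_le_range (by rw [map_comp, hφG, map_zero])
    fun x hx ↦ ?_
  induction x using induction_on with | h a => ?_
  have ha (k : ℕ) : φ (a k) ∈ (Ideal.span {q} ^ k • ⊤ : Submodule R P) :=
    (Submodule.Quotient.mk_eq_zero _).mp congr(($hx).val k)
  obtain ⟨b, hb⟩ := exists_adicCauchySequence_of_forall_exists_add
    (Q := fun k b ↦ G b ≡ a (c + k) [SMOD (Ideal.span {q} ^ k • ⊤ : Submodule R M)])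
    (x₀ := 0) (by simp) fun k b hb ↦ exists_map_add_smodEq_pow_succ hφG hP hc
      ((hb.trans (a.2 (by lia)).symm).trans (a.2 (by lia))) (ha _)
  refine ⟨mk _ _ b, ext fun n ↦ ?_⟩
  simpa [SModEq] using (hb n).trans (a.2 (by lia)).symm

end Approximation

end AdicCompletion

namespace Ideal

variable (J : Ideal R) (q : R)

def saturation : Ideal R where
  carrier := {y | ∃ k, q ^ k * y ∈ J}
  add_mem' := by
    rintro a b ⟨k, hk⟩ ⟨l, hl⟩
    refine ⟨k + l, ?_⟩
    rw [show q ^ (k + l) * (a + b) = q ^ l * (q ^ k * a) + q ^ k * (q ^ l * b) by ring]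
    exact J.add_mem (J.mul_mem_left _ hk) (J.mul_mem_left _ hl)
  zero_mem' := ⟨0, by simp⟩
  smul_mem' := by
    rintro r a ⟨k, hk⟩
    exact ⟨k, by rw [smul_eq_mul, mul_left_comm]; exact J.mul_mem_left r hk⟩

variable {J q}

theorem mem_saturation {y : R} : y ∈ J.saturation q ↔ ∃ k, q ^ k * y ∈ J := Iff.rfl

variable (J q)

theorem isSMulRegular_quotient_saturation : IsSMulRegular (R ⧸ J.saturation q) q := by
  refine isSMulRegular_iff_right_eq_zero_of_smul.mpr fun z hz ↦ ?_
  induction z using Submodule.Quotient.induction_on with | H y => ?_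
  rw [← Submodule.Quotient.mk_smul, Submodule.Quotient.mk_eq_zero] at hz
  rw [Submodule.Quotient.mk_eq_zero]
  obtain ⟨k, hk⟩ := hz
  exact ⟨k + 1, by rwa [pow_succ, mul_assoc]⟩

variable {J q}

theorem exists_pow_mul_mem_of_fg_saturation (h : (J.saturation q).FG) :
    ∃ c, ∀ y ∈ J.saturation q, q ^ c * y ∈ J := by
  obtain ⟨n, t, ht⟩ := fg_iff_exists_fin_generating_family.mp h
  choose k hk using fun j ↦ mem_saturation.mp (ht ▸ subset_span (Set.mem_range_self j) :
    t j ∈ J.saturation q)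
  refine ⟨∑ j, k j, fun y hy ↦ ?_⟩
  rw [← ht] at hy
  induction hy using span_induction with
  | mem _ hy =>
    obtain ⟨j, rfl⟩ := hy
    rw [← Nat.sub_add_cancel (Finset.single_le_sum (by simp) (Finset.mem_univ j) :
      k j ≤ ∑ j, k j), pow_add, mul_assoc]
    exact J.mul_mem_left _ (hk j)
  | zero => simp
  | add _ _ _ _ ha hb => rw [mul_add]; exact J.add_mem ha hb
  | smul r _ _ ha => rw [smul_eq_mul, mul_left_comm]; exact J.mul_mem_left r ha

end Ideal

theorem Fintype.fg_ker_linearCombination {ι : Type*} [Fintype ι] (f : ι → R)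
    [Module.FinitePresentation R (Ideal.span (Set.range f))] :
    (LinearMap.ker (Fintype.linearCombination R f)).FG := by
  have : Module.FinitePresentation R (LinearMap.range (Fintype.linearCombination R f)) :=
    .of_equiv (LinearEquiv.ofEq _ _ (Fintype.range_linearCombination R f).symm)
  simpa using Module.FinitePresentation.fg_ker _
    (Fintype.linearCombination R f).surjective_rangeRestrict

theorem smulSum_comp_pi_smulSum_eq_zero {ι κ : Type*} [Fintype ι] [Fintype κ] {f : ι → R}
    {s : κ → ι → R} (hs : ∀ j, Fintype.linearCombination R f (s j) = 0) :
    smulSum f ∘ₗ LinearMap.pi (fun i ↦ smulSum (M := M) fun j ↦ s j i) = 0 := by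
  refine LinearMap.ext fun b ↦ ?_
  simp only [LinearMap.comp_apply, LinearMap.zero_apply, LinearMap.pi_apply, smulSum_apply,
    Finset.smul_sum, smul_smul]
  rw [Finset.sum_comm]
  refine Finset.sum_eq_zero fun j _ ↦ ?_
  have hj : ∑ i, f i * s j i = 0 := by
    simpa [Fintype.linearCombination_apply, mul_comm] using hs j
  rw [← Finset.sum_smul, hj, zero_smul]

theorem sum_smul_mem_range_pi_smulSum {ι κ κ' : Type*} [Fintype κ] [Fintype κ']
    {s : κ → ι → R} {V : κ' → ι → R} (hV : ∀ j, V j ∈ span R (Set.range s)) (y : κ' → M) :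
    (fun i ↦ ∑ j, V j i • y j) ∈
      LinearMap.range (LinearMap.pi fun i ↦ smulSum fun j ↦ s j i) := by
  classical
  have hspan (z : M) : span R (Set.range s) ≤
      (LinearMap.range (LinearMap.pi fun i ↦ smulSum fun j ↦ s j i)).comap
        ((LinearMap.toSpanSingleton R M z).compLeft ι) := by
    refine span_le.mpr ?_
    rintro _ ⟨j, rfl⟩
    exact ⟨Pi.single j z, by ext i; simp [Pi.single_apply]⟩
  have hsum : (fun i ↦ ∑ j, V j i • y j) =
      ∑ j, (LinearMap.toSpanSingleton R M (y j)).compLeft ι (V j) := by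
    ext i
    simp
  rw [hsum]
  exact sum_mem fun j _ ↦ hspan (y j) (hV j)

namespace Module.Flat

variable {ι : Type*} [Fintype ι] [Module.Flat R M] {q : R} {f : ι → R} {c : ℕ}

theorem exists_eq_pi_smulSum_add_pow_smul {κ : Type*} [Fintype κ] {s : κ → ι → R}
    (hs : span R (Set.range s) = LinearMap.ker (Fintype.linearCombination R f))
    (hc : ∀ y ∈ (Ideal.span (Set.range f)).saturation q, q ^ c * y ∈ Ideal.span (Set.range f))
    {k : ℕ} {v : ι → M} {u : M} (hv : smulSum f v = q ^ (c + k) • u) :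
    ∃ b w, v = LinearMap.pi (fun i ↦ smulSum fun j ↦ s j i) b + q ^ k • w := by
  let g : Option ι → R := fun o ↦ o.elim (q ^ (c + k)) (-f ·)
  let z : Option ι → M := fun o ↦ o.elim u v
  have hrel : ∑ o, g o • z o = 0 := by
    simp [g, z, Fintype.sum_option, ← hv]
  obtain ⟨n, B, y, hBy, hB⟩ := isTrivialRelation_of_sum_smul_eq_zero hrel
  have hB' (j) : q ^ (c + k) * B none j = ∑ i, f i * B (some i) j := by
    have := hB j
    simp only [Fintype.sum_option, Option.elim_none, Option.elim_some, neg_mul,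
      Finset.sum_neg_distrib, g] at this
    linear_combination this
  have hsat (j) : B none j ∈ (Ideal.span (Set.range f)).saturation q :=
    ⟨c + k, hB' j ▸ sum_mem fun i _ ↦ Ideal.mul_mem_right _ _ (subset_span ⟨i, rfl⟩)⟩
  choose D hD using fun j ↦ (mem_span_range_iff_exists_fun R).mp (hc _ (hsat j))
  -- Subtracting `q ^ k • ∑ j, D j • y j` from `v` leaves a combination of syzygies of `f`.
  have hcol (j) : (fun i ↦ B (some i) j - q ^ k * D j i) ∈ span R (Set.range s) := by
    rw [hs, LinearMap.mem_ker, Fintype.linearCombination_apply]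
    have hDj : ∑ i, D j i * f i = q ^ c * B none j := hD j
    simp only [smul_eq_mul, sub_mul, Finset.sum_sub_distrib, mul_assoc, ← Finset.mul_sum, hDj,
      mul_comm (B (some _) j), ← hB']
    ring
  obtain ⟨b, hb⟩ := sum_smul_mem_range_pi_smulSum hcol y
  refine ⟨b, fun i ↦ ∑ j, D j i • y j, ?_⟩
  rw [hb]
  ext i
  simpa [z, sub_smul, Finset.smul_sum, smul_smul] using hBy (some i)

theorem isTrivialRelation_adicCompletion (hM : IsSMulRegular M q) {m : ℕ}
    {s : Fin m → ι → R} (hs : span R (Set.range s) = LinearMap.ker (Fintype.linearCombination R f))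
    (hc : ∀ y ∈ (Ideal.span (Set.range f)).saturation q, q ^ c * y ∈ Ideal.span (Set.range f))
    {x : ι → AdicCompletion (Ideal.span {q}) M} (hx : ∑ i, f i • x i = 0) :
    IsTrivialRelation f x := by
  classical
  have hexact := AdicCompletion.map_exact_of_forall_eq_add_smul (c := c)
    (smulSum_comp_pi_smulSum_eq_zero (M := M) fun j ↦ hs ▸ subset_span (Set.mem_range_self j)) hM
    fun v u hv ↦ by simpa using exists_eq_pi_smulSum_add_pow_smul hs hc (k := 1) hv
  obtain ⟨X, rfl⟩ :=
    (AdicCompletion.piEquivOfFintype (Ideal.span {q}) fun _ : ι ↦ M).surjective x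
  simp only [AdicCompletion.piEquivOfFintype_apply, AdicCompletion.pi, LinearMap.pi_apply] at hx ⊢
  obtain ⟨Y, rfl⟩ := (hexact X).mp (by rwa [AdicCompletion.map_smulSum])
  refine ⟨m, fun i j ↦ s j i, fun j ↦ AdicCompletion.map _ (LinearMap.proj j) Y, fun i ↦ ?_,
    fun j ↦ ?_⟩
  · rw [LinearMap.pi_apply, AdicCompletion.map_comp_apply, LinearMap.proj_pi,
      AdicCompletion.map_smulSum]
  · have hj : s j ∈ LinearMap.ker (Fintype.linearCombination R f) :=
      hs ▸ subset_span (Set.mem_range_self j)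
    rw [LinearMap.mem_ker, Fintype.linearCombination_apply] at hj
    simpa [mul_comm] using hj

end Module.Flat

theorem Module.Flat.adicCompletion_of_forall_finitePresentation {R : Type u} [CommRing R] {q : R}
    (hq : IsSMulRegular R q)
    (H : ∀ (N : Type u) [AddCommGroup N] [Module R N], Module.Finite R N → IsSMulRegular N q →
      Module.FinitePresentation R N)
    (M : Type*) [AddCommGroup M] [Module R M] [Module.Flat R M] :
    Module.Flat R (AdicCompletion (Ideal.span {q}) M) := by
  refine of_forall_isTrivialRelation fun {l f x} hx ↦ ?_
  set J := Ideal.span (Set.range f)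
  have : Module.FinitePresentation R J :=
    H J (Module.Finite.iff_fg.mpr (fg_span (Set.finite_range f))) (hq.submodule J)
  obtain ⟨m, s, hs⟩ :=
    fg_iff_exists_fin_generating_family.mp (Fintype.fg_ker_linearCombination f)
  have : Module.FinitePresentation R (R ⧸ J.saturation q) :=
    H _ inferInstance (J.isSMulRegular_quotient_saturation q)
  have hfg := Module.FinitePresentation.fg_ker _ (J.saturation q).mkQ_surjective
  rw [Submodule.ker_mkQ] at hfg
  obtain ⟨c, hc⟩ := Ideal.exists_pow_mul_mem_of_fg_saturation hfg
  exact isTrivialRelation_adicCompletion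
    (isSMulRegular_of_isRegular ((Commute.isRegular_iff (Commute.all q)).mpr hq)) hs hc hx

theorem adicCompletion_flat_and_pTorsionFree_general
    (p : ℕ) (R : Type u) [CommRing R]
    (hR : Function.Injective (fun r : R => (p : R) * r))
    (HFP : ∀ (M : Type u) [AddCommGroup M] [Module R M],
      Module.Finite R M →
      Function.Injective (fun m : M => (p : R) • m) →
      Module.FinitePresentation R M)
    (F : Type u) [AddCommGroup F] [Module R F] [Module.Flat R F] :
    Module.Flat R (AdicCompletion (Ideal.span {(p : R)}) F) ∧
      Function.Injective
        (fun x : AdicCompletion (Ideal.span {(p : R)}) F => (p : R) • x) := by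
  have hF : IsSMulRegular F (p : R) :=
    Module.Flat.isSMulRegular_of_isRegular ((Commute.isRegular_iff (Commute.all _)).mpr hR)
  exact ⟨Module.Flat.adicCompletion_of_forall_finitePresentation hR HFP F, hF.adicCompletion⟩

/-- Let `p` be a prime and `R` a commutative `p`-torsion-free ring such
that every finitely generated `p`-torsion-free `R`-module is finitely presented.  Then the
`p`-adic completion `F^∧` of a flat `R`-module `F` is flat over `R` and `p`-torsion-free. -/
theorem adicCompletion_flat_and_pTorsionFree
    (p : ℕ) (hp : p.Prime) (R : Type u) [CommRing R]
    (hR : Function.Injective (fun r : R => (p : R) * r))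
    (HFP : ∀ (M : Type u) [AddCommGroup M] [Module R M],
      Module.Finite R M →
      Function.Injective (fun m : M => (p : R) • m) →
      Module.FinitePresentation R M)
    (F : Type u) [AddCommGroup F] [Module R F] [Module.Flat R F] :
    Module.Flat R (AdicCompletion (Ideal.span {(p : R)}) F) ∧
      Function.Injective
        (fun x : AdicCompletion (Ideal.span {(p : R)}) F => (p : R) • x) :=
  adicCompletion_flat_and_pTorsionFree_general p R hR HFP F
end

section
/- Let B be a commutative ring, x ∈ B a nilpotent element, A a commutative B-algebra, and M a finitely generated A-module that is flat as a B-module. If M/xM is a free module over A/xA, then M is a free A-module. -/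
/-!
Lift a basis of `M/xM` over `A/xA` to a map `f : A^(ι) → M`. It is surjective modulo the
nilpotent ideal `(x)`, hence surjective, and its kernel lies in `x • A^(ι)`. Flatness over `B`
upgrades this to `ker f = x • ker f`: if `f (x • c) = 0`, the relation `x • f c = 0` in the flat
module `M` is trivial, so `f c = f v` for some `v` with `x • v = 0`, and `x • c = x • (c - v)`.
Since `x` is nilpotent, `ker f = 0`.
-/

universe u v w

open Pointwise

namespace Submodule

variable {R M : Type*} [CommSemiring R] [AddCommMonoid M] [Module R M] {I : Ideal R}

theorem le_pow_smul_of_le_smul {N : Submodule R M} (h : N ≤ I • N) (n : ℕ) : N ≤ I ^ n • N := by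
  induction n with
  | zero => simp
  | succ n ih =>
    calc N ≤ I • N := h
      _ ≤ I • I ^ n • N := smul_mono_right I ih
      _ = I ^ (n + 1) • N := by rw [pow_succ', smul_smul]

theorem eq_bot_of_le_smul_of_isNilpotent (hI : IsNilpotent I) {N : Submodule R M}
    (h : N ≤ I • N) : N = ⊥ := by
  obtain ⟨n, hn⟩ := hI
  simpa [hn] using le_pow_smul_of_le_smul h n

end Submodule

theorem Submodule.eq_top_of_sup_smul_top_of_isNilpotent {R M : Type*} [CommRing R]
    [AddCommGroup M] [Module R M] {I : Ideal R} (hI : IsNilpotent I) {N : Submodule R M}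
    (h : N ⊔ I • ⊤ = ⊤) : N = ⊤ := by
  have hQ : (⊤ : Submodule R (M ⧸ N)) = I • ⊤ := calc
    ⊤ = map N.mkQ (I • ⊤) := ((map_mkQ_eq_top N _).mpr h).symm
    _ = I • ⊤ := by rw [map_smul'', map_top, range_mkQ]
  rw [← Quotient.subsingleton_iff, ← Submodule.subsingleton_iff R, ← subsingleton_iff_bot_eq_top]
  exact (eq_bot_of_le_smul_of_isNilpotent hI hQ.le).symm

theorem Ideal.isNilpotent_span_singleton {R : Type*} [CommSemiring R] {a : R}
    (ha : IsNilpotent a) : IsNilpotent (Ideal.span {a}) := by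
  obtain ⟨n, hn⟩ := ha
  exact ⟨n, by rw [Ideal.span_singleton_pow, hn, Ideal.span_singleton_zero, Ideal.zero_eq_bot]⟩

theorem Module.Flat.exists_smul_eq_zero_of_surjective {R M F : Type*} [CommRing R]
    [AddCommGroup M] [Module R M] [Module.Flat R M] [AddCommGroup F] [Module R F]
    {g : F →ₗ[R] M} (hg : Function.Surjective g) {r : R} {m : M} (h : r • m = 0) :
    ∃ v, r • v = 0 ∧ g v = m := by
  obtain ⟨k, a, y, hy, ha⟩ :=
    Module.Flat.isTrivialRelation_of_sum_smul_eq_zero (f := fun _ : Unit => r) (x := fun _ => m)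
      (by simpa using h)
  choose v hv using fun j => hg (y j)
  refine ⟨∑ j, a () j • v j, ?_, ?_⟩
  · have hra : ∀ j, r * a () j = 0 := by simpa using ha
    simp only [Finset.smul_sum, smul_smul, hra, zero_smul, Finset.sum_const_zero]
  · simp [hy (), hv]

theorem LinearMap.ker_le_smul_ker_of_flat {B A F M : Type*} [CommRing B] [CommRing A]
    [Algebra B A] [AddCommGroup F] [Module A F] [Module B F] [IsScalarTower B A F]
    [AddCommGroup M] [Module A M] [Module B M] [IsScalarTower B A M] [Module.Flat B M]
    {f : F →ₗ[A] M} (hf : Function.Surjective f) {x : B}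
    (hker : ker f ≤ Ideal.span {algebraMap B A x} • ⊤) :
    ker f ≤ Ideal.span {algebraMap B A x} • ker f := by
  rw [Submodule.ideal_span_singleton_smul] at hker ⊢
  intro k hk
  obtain ⟨c, -, rfl⟩ := (Submodule.mem_smul_pointwise_iff_exists _ _ _).mp (hker hk)
  have hxc : x • f c = 0 := by rwa [← algebraMap_smul A, ← map_smul]
  obtain ⟨v, hxv, hv⟩ :=
    Module.Flat.exists_smul_eq_zero_of_surjective (g := f.restrictScalars B) hf hxc
  have hav : algebraMap B A x • v = 0 := by rwa [algebraMap_smul]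
  have hcv : c - v ∈ ker f := by
    rw [mem_ker, map_sub, ← hv, restrictScalars_apply, sub_self]
  rw [← sub_zero (_ • c), ← hav, ← smul_sub]
  exact Submodule.smul_mem_pointwise_smul _ _ _ hcv

namespace Module.Basis

variable {A M ι : Type*} [CommRing A] [AddCommGroup M] [Module A M] {I : Ideal A}
  (b : Basis ι (A ⧸ I) (M ⧸ I • (⊤ : Submodule A M))) {m : ι → M}

theorem mk_linearCombination_eq_repr_symm (hm : ∀ i, Submodule.Quotient.mk (m i) = b i)
    (c : ι →₀ A) :
    Submodule.Quotient.mk (Finsupp.linearCombination A m c) =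
      b.repr.symm (c.mapRange (Ideal.Quotient.mk I) (map_zero _)) := by
  induction c using Finsupp.induction_linear with
  | zero => simp
  | add c d hc hd => simp [Finsupp.mapRange_add, hc, hd]
  | single i r =>
    rw [Finsupp.linearCombination_single, Finsupp.mapRange_single, repr_symm_single, ← hm,
      Module.Quotient.mk_smul_mk]

theorem range_linearCombination_sup_smul_top (hm : ∀ i, Submodule.Quotient.mk (m i) = b i) :
    LinearMap.range (Finsupp.linearCombination A m) ⊔ I • ⊤ = ⊤ := by
  rw [sup_comm, ← Submodule.map_mkQ_eq_top, ← LinearMap.range_comp, LinearMap.range_eq_top]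
  intro q
  obtain ⟨c, hc⟩ := Finsupp.mapRange_surjective _ (map_zero _) Ideal.Quotient.mk_surjective
    (b.repr q)
  refine ⟨c, ?_⟩
  rw [LinearMap.comp_apply, Submodule.mkQ_apply, mk_linearCombination_eq_repr_symm b hm, hc,
    LinearEquiv.symm_apply_apply]

theorem ker_linearCombination_le_smul_top (hm : ∀ i, Submodule.Quotient.mk (m i) = b i) :
    LinearMap.ker (Finsupp.linearCombination A m) ≤ I • ⊤ := by
  intro k hk
  have hkI : ∀ i, k i ∈ I := by
    have h0 := congrArg (Submodule.Quotient.mk (p := I • (⊤ : Submodule A M))) hk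
    rw [mk_linearCombination_eq_repr_symm b hm, Submodule.Quotient.mk_zero,
      LinearEquiv.map_eq_zero_iff] at h0
    intro i
    simpa [Ideal.Quotient.eq_zero_iff_mem] using DFunLike.congr_fun h0 i
  rw [← k.sum_single]
  exact Submodule.sum_mem _ fun i _ => by
    rw [← Finsupp.smul_single_one]
    exact Submodule.smul_mem_smul (hkI i) Submodule.mem_top

end Module.Basis

theorem free_of_quotient_nilpotent_free_general
    (B : Type u) [CommRing B] (A : Type v) [CommRing A] [Algebra B A]
    (x : B) (hx : IsNilpotent x)
    (M : Type w) [AddCommGroup M] [Module A M] [Module B M] [IsScalarTower B A M]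
    [Module.Flat B M]
    (hfree : Module.Free (A ⧸ Ideal.span {algebraMap B A x})
      (M ⧸ (Ideal.span {algebraMap B A x} • ⊤ : Submodule A M))) :
    Module.Free A M := by
  set I := Ideal.span {algebraMap B A x}
  have hI : IsNilpotent I := Ideal.isNilpotent_span_singleton (hx.map (algebraMap B A))
  let b := Module.Free.chooseBasis (A ⧸ I) (M ⧸ I • (⊤ : Submodule A M))
  choose m hm using fun i => Submodule.Quotient.mk_surjective _ (b i)
  set f := Finsupp.linearCombination A m
  have hsurj : Function.Surjective f := LinearMap.range_eq_top.mp <|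
    Submodule.eq_top_of_sup_smul_top_of_isNilpotent hI (b.range_linearCombination_sup_smul_top hm)
  have hinj : Function.Injective f := LinearMap.ker_eq_bot.mp <|
    Submodule.eq_bot_of_le_smul_of_isNilpotent hI
      (LinearMap.ker_le_smul_ker_of_flat hsurj (b.ker_linearCombination_le_smul_top hm))
  exact Module.Free.of_equiv (LinearEquiv.ofBijective f ⟨hinj, hsurj⟩)

/-- Let `B` be a commutative ring, `x ∈ B` nilpotent, `A` a commutative
`B`-algebra, and `M` a finitely generated `A`-module that is flat as a `B`-module.
If `M/xM` is free over `A/xA`, then `M` is a free `A`-module. -/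
theorem free_of_quotient_nilpotent_free
    (B : Type u) [CommRing B] (A : Type v) [CommRing A] [Algebra B A]
    (x : B) (hx : IsNilpotent x)
    (M : Type w) [AddCommGroup M] [Module A M] [Module B M] [IsScalarTower B A M]
    [Module.Finite A M] [Module.Flat B M]
    (hfree : Module.Free (A ⧸ Ideal.span {algebraMap B A x})
      (M ⧸ (Ideal.span {algebraMap B A x} • ⊤ : Submodule A M))) :
    Module.Free A M :=
  free_of_quotient_nilpotent_free_general B A x hx M hfree
end

section
/- Let R be a Noetherian commutative ring and I, J ⊆ R ideals. Then for every n ∈ ℕ there exists m ∈ ℕ such that I^m ∩ J^m ⊆ (I ∩ J)^n. Combined with the trivial inclusion (I ∩ J)^m ⊆ I^m ∩ J^m, the sequences of ideals {(I ∩ J)^n} and {I^n ∩ J^n} are cofinal in each other. -/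
universe u

/-! Artin–Rees for the submodule `Iⁿ` of `R` and the ideal `J` gives `Jᵐ ∩ Iⁿ ⊆ JⁿIⁿ` for
`m` large, and `JⁿIⁿ = (JI)ⁿ ⊆ (I ∩ J)ⁿ`. -/

theorem Ideal.exists_pow_add_smul_top_inf_le_pow_smul {R M : Type*} [CommRing R]
    [IsNoetherianRing R] [AddCommGroup M] [Module R M] [Module.Finite R M]
    (I : Ideal R) (N : Submodule R M) : ∃ k : ℕ, ∀ n, I ^ (n + k) • ⊤ ⊓ N ≤ I ^ n • N := by
  obtain ⟨k, hk⟩ := I.exists_pow_inf_eq_pow_smul N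
  refine ⟨k, fun n => ?_⟩
  rw [hk (n + k) le_add_self, Nat.add_sub_cancel]
  exact smul_mono_right _ inf_le_right

theorem Ideal.exists_pow_add_inf_le_pow_mul {R : Type*} [CommRing R] [IsNoetherianRing R]
    (I J : Ideal R) : ∃ k : ℕ, ∀ n, I ^ (n + k) ⊓ J ≤ I ^ n * J := by
  simpa only [smul_eq_mul, Ideal.mul_top] using I.exists_pow_add_smul_top_inf_le_pow_smul J

theorem Ideal.inf_pow_le_pow_inf_pow {R : Type*} [CommSemiring R] (I J : Ideal R) (m : ℕ) :
    (I ⊓ J) ^ m ≤ I ^ m ⊓ J ^ m :=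
  le_inf (Ideal.pow_right_mono inf_le_left m) (Ideal.pow_right_mono inf_le_right m)

/-- Let `R` be a Noetherian commutative ring and `I, J ⊆ R` ideals.
For every `n` there is an `m` with `I^m ∩ J^m ⊆ (I ∩ J)^n`; together with the trivial
inclusion `(I ∩ J)^m ⊆ I^m ∩ J^m`, the sequences `{(I ∩ J)^n}` and `{I^n ∩ J^n}` are
cofinal in each other. -/
theorem pow_inf_ideal_cofinal
    (R : Type u) [CommRing R] [IsNoetherianRing R] (I J : Ideal R) :
    (∀ n : ℕ, ∃ m : ℕ, I ^ m ⊓ J ^ m ≤ (I ⊓ J) ^ n) ∧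
      (∀ m : ℕ, (I ⊓ J) ^ m ≤ I ^ m ⊓ J ^ m) := by
  refine ⟨fun n => ?_, I.inf_pow_le_pow_inf_pow J⟩
  obtain ⟨k, hk⟩ := J.exists_pow_add_inf_le_pow_mul (I ^ n)
  refine ⟨n + k, ?_⟩
  calc I ^ (n + k) ⊓ J ^ (n + k) ≤ J ^ (n + k) ⊓ I ^ n := by
        rw [inf_comm]
        exact inf_le_inf_left _ (Ideal.pow_le_pow_right le_self_add)
    _ ≤ J ^ n * I ^ n := hk n
    _ = (J * I) ^ n := (mul_pow J I n).symm
    _ ≤ (I ⊓ J) ^ n := Ideal.pow_right_mono (Ideal.mul_le_inf.trans_eq (inf_comm J I)) n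
end

section
/- Let A be a commutative ring, J ⊆ A an ideal, and N ∈ ℕ. Let R = A[X_1, …, X_N] be the polynomial ring, Δ ⊆ R the ideal generated by X_1, …, X_N, and 𝔍 = J·R + Δ (the kernel of the map R → A/J sending each X_k to 0 and reducing coefficients mod J). Fix integers 0 ≤ j ≤ m. Multiplication in R induces a well-defined A-linear map (J^{m−j}/J^{m−j+1}) ⊗_A (Δ^j/Δ^{j+1}) → (J^m·R + J^{m−1}·Δ + ⋯ + J^{m−j}·Δ^j + 𝔍^{m+1}) / (J^m·R + J^{m−1}·Δ + ⋯ + J^{m−j+1}·Δ^{j−1} + 𝔍^{m+1}), and this map is an isomorphism of A-modules. -/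
universe u

open TensorProduct

namespace EnvelopeFiltration

variable (A : Type u) [CommRing A] (J : Ideal A) (N : ℕ)

/-- The ideal `Δ = (X_1, …, X_N)` of `A[X_1, …, X_N]`. -/
noncomputable def Δ : Ideal (MvPolynomial (Fin N) A) :=
  Ideal.span (Set.range (MvPolynomial.X : Fin N → MvPolynomial (Fin N) A))

/-- The ideal `J·R` of `R = A[X_1, …, X_N]` generated by the image of `J`. -/
noncomputable def JR : Ideal (MvPolynomial (Fin N) A) :=
  Ideal.map (MvPolynomial.C : A →+* MvPolynomial (Fin N) A) J

/-- The ideal `𝔍 = J·R + Δ`, the kernel of `R → A/J`, `X_k ↦ 0`. -/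
noncomputable def 𝔍 : Ideal (MvPolynomial (Fin N) A) := JR A J N + Δ A N

/-- The ideal `J^m·R + J^{m-1}·Δ + ⋯ + J^{m-j+1}·Δ^{j-1} + 𝔍^{m+1}` of `R`
(the sum ranges over `i < j`). -/
noncomputable def filt (m j : ℕ) : Ideal (MvPolynomial (Fin N) A) :=
  (∑ i ∈ Finset.range j, JR A J N ^ (m - i) * Δ A N ^ i) + 𝔍 A J N ^ (m + 1)

end EnvelopeFiltration

/-!
Multiplication is well defined because `J^{m-j+1}·Δ^j` and `J^{m-j}·Δ^{j+1}` lie in `𝔍^{m+1}`,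
and its image is the image of `J^{m-j}·Δ^j`, the summand by which `filt m (j+1)` exceeds
`filt m j`. For injectivity, `Δ^j/Δ^{j+1}` is free on the monomials `x^ν` of degree `j`, so the
source is `⊕_{|ν| = j} J^{m-j}/J^{m-j+1}`. Every element of `filt m j` lies in
`J^{m-j+1}·R + Δ^{j+1}`, hence has its degree-`j` coefficients in `J^{m-j+1}`; so taking the
coefficient of `x^ν` modulo `J^{m-j+1}` recovers the `ν`-th component.
-/

theorem Ideal.sup_pow_add_add_one_le {R : Type*} [CommSemiring R] (I K : Ideal R) (a b : ℕ) :
    (I ⊔ K) ^ (a + b + 1) ≤ I ^ (a + 1) ⊔ K ^ (b + 1) := by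
  rw [← Ideal.add_eq_sup, ← Ideal.add_eq_sup, add_pow, Ideal.sum_eq_sup]
  refine Finset.sup_le fun i _ => ?_
  by_cases hi : a + 1 ≤ i
  · exact Ideal.mul_le_left.trans (Ideal.mul_le_left.trans
      ((Ideal.pow_le_pow_right hi).trans le_sup_left))
  · exact Ideal.mul_le_left.trans (Ideal.mul_le_right.trans
      ((Ideal.pow_le_pow_right (by omega)).trans le_sup_right))

section QuotTensorQuotMul

variable {A R : Type*} [CommRing A] [CommRing R] [Algebra A R]
  {I I' : Ideal A} {D D' : Ideal R} {F : Ideal R}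

noncomputable def quotTensorQuotMul
    (h₁ : ∀ a ∈ I', ∀ d ∈ D, algebraMap A R a * d ∈ F)
    (h₂ : ∀ a ∈ I, ∀ d ∈ D', algebraMap A R a * d ∈ F) :
    (I ⧸ Submodule.comap I.subtype I') ⊗[A] (D ⧸ Submodule.comap D.subtype D') →ₗ[A] R ⧸ F :=
  let μ : I →ₗ[A] D →ₗ[A] R ⧸ F :=
    ((LinearMap.mul A R).compl₁₂ (Algebra.linearMap A R ∘ₗ I.subtype)
      (D.subtype.restrictScalars A)).compr₂ (F.mkQ.restrictScalars A)
  lift <| (LinearMap.liftQ₂ _ ((Submodule.comap D.subtype D').restrictScalars A) μ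
      (fun a ha => LinearMap.ext fun d => (Submodule.Quotient.mk_eq_zero F).mpr (h₁ a ha d d.2))
      (fun d hd => LinearMap.ext fun a => (Submodule.Quotient.mk_eq_zero F).mpr (h₂ a a.2 d hd))
    ).compl₂ (Submodule.Quotient.restrictScalarsEquiv A _).symm.toLinearMap

variable (h₁ : ∀ a ∈ I', ∀ d ∈ D, algebraMap A R a * d ∈ F)
  (h₂ : ∀ a ∈ I, ∀ d ∈ D', algebraMap A R a * d ∈ F)

theorem quotTensorQuotMul_mk_tmul_mk (a : I) (d : D) :
    quotTensorQuotMul h₁ h₂ (Submodule.Quotient.mk a ⊗ₜ Submodule.Quotient.mk d) =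
      Submodule.Quotient.mk (algebraMap A R a * d) :=
  rfl

theorem range_quotTensorQuotMul :
    LinearMap.range (quotTensorQuotMul h₁ h₂) =
      Submodule.map (F.mkQ.restrictScalars A)
        ((F ⊔ I.map (algebraMap A R) * D).restrictScalars A) := by
  apply le_antisymm
  · rw [LinearMap.range_eq_map, ← TensorProduct.span_tmul_eq_top, Submodule.map_span_le]
    rintro _ ⟨q, e, rfl⟩
    obtain ⟨a, rfl⟩ := Submodule.mkQ_surjective _ q
    obtain ⟨d, rfl⟩ := Submodule.mkQ_surjective _ e
    exact ⟨_, Submodule.mem_sup_right (Ideal.mul_mem_mul (Ideal.mem_map_of_mem _ a.2) d.2), rfl⟩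
  · rintro _ ⟨p, hp, rfl⟩
    obtain ⟨f, hf, x, hx, rfl⟩ := Submodule.mem_sup.mp hp
    have hx : x ∈ I • D.restrictScalars A := by
      rwa [← Ideal.smul_restrictScalars, Ideal.smul_eq_mul]
    rw [map_add, LinearMap.restrictScalars_apply, Submodule.mkQ_apply,
      (Submodule.Quotient.mk_eq_zero F).mpr hf, zero_add]
    refine Submodule.smul_induction_on hx (fun a ha d hd => ?_)
      (fun x y hx hy => by rw [map_add]; exact add_mem hx hy)
    exact ⟨_, (quotTensorQuotMul_mk_tmul_mk h₁ h₂ ⟨a, ha⟩ ⟨d, hd⟩).trans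
      (by rw [← Algebra.smul_def]; rfl)⟩

end QuotTensorQuotMul

namespace MvPolynomial

open Finsupp

variable {σ A : Type*} [CommRing A]

theorem coeff_mem_of_mem_map_C_sup_pow_idealOfVars {I : Ideal A} {n : ℕ} {p : MvPolynomial σ A}
    (hp : p ∈ I.map C ⊔ idealOfVars σ A ^ n) {ν : σ →₀ ℕ} (hν : degree ν < n) :
    coeff ν p ∈ I := by
  obtain ⟨x, hx, y, hy, rfl⟩ := Submodule.mem_sup.mp hp
  rw [coeff_add, (mem_pow_idealOfVars_iff' n y).mp hy ν hν, add_zero]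
  exact mem_map_C_iff.mp hx ν

noncomputable def powIdealOfVarsQuotToCoeffs (j : ℕ) :
    ((idealOfVars σ A ^ j : Ideal (MvPolynomial σ A)) ⧸
      Submodule.comap (idealOfVars σ A ^ j).subtype (idealOfVars σ A ^ (j + 1)))
      →ₗ[A] ({ν : σ →₀ ℕ // degree ν = j} →₀ A) :=
  (((Submodule.comap _ _).restrictScalars A).liftQ
    (Finsupp.lsubtypeDomain {ν | degree ν = j} ∘ₗ (basisMonomials σ A).repr.toLinearMap ∘ₗ
      (idealOfVars σ A ^ j).subtype.restrictScalars A)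
    fun d hd => by
      ext ν
      exact (mem_pow_idealOfVars_iff' (j + 1) d.1).mp hd ν.1 (ν.2.trans_lt j.lt_succ_self))
    ∘ₗ (Submodule.Quotient.restrictScalarsEquiv A _).symm.toLinearMap

theorem powIdealOfVarsQuotToCoeffs_mk_apply {j : ℕ}
    (d : (idealOfVars σ A ^ j : Ideal (MvPolynomial σ A))) (ν : {ν : σ →₀ ℕ // degree ν = j}) :
    powIdealOfVarsQuotToCoeffs j (Submodule.Quotient.mk d) ν = coeff ν.1 d.1 :=
  rfl

theorem powIdealOfVarsQuotToCoeffs_bijective (j : ℕ) :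
    Function.Bijective (powIdealOfVarsQuotToCoeffs (σ := σ) (A := A) j) := by
  constructor
  · refine (injective_iff_map_eq_zero _).mpr fun q hq => ?_
    obtain ⟨d, rfl⟩ := Submodule.mkQ_surjective _ q
    refine (Submodule.Quotient.mk_eq_zero _).mpr ((mem_pow_idealOfVars_iff' (j + 1) d.1).mpr
      fun ν hν => ?_)
    rcases (Nat.lt_succ_iff.mp hν).lt_or_eq with hlt | rfl
    · exact (mem_pow_idealOfVars_iff' _ d.1).mp d.2 ν hlt
    · exact DFunLike.congr_fun hq ⟨ν, rfl⟩
  · rw [← LinearMap.range_eq_top, eq_top_iff, ← Finsupp.supported_univ,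
      Finsupp.supported_eq_span_single, Submodule.span_le]
    rintro _ ⟨ν, -, rfl⟩
    have hν : monomial ν.1 (1 : A) ∈ idealOfVars σ A ^ j :=
      (mem_pow_idealOfVars_iff _ _).mpr fun μ hμ => by
        rw [Finset.mem_singleton.mp (support_monomial_subset hμ)]
        exact ν.2.ge
    refine ⟨Submodule.Quotient.mk ⟨_, hν⟩, ?_⟩
    ext μ
    classical
    simp only [powIdealOfVarsQuotToCoeffs_mk_apply, coeff_monomial, Finsupp.single_apply,
      Subtype.ext_iff]

noncomputable def quotCoeff {I : Ideal A} {n : ℕ} {F : Ideal (MvPolynomial σ A)}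
    (hF : F ≤ I.map C ⊔ idealOfVars σ A ^ n) (ν : σ →₀ ℕ) (hν : degree ν < n) :
    (MvPolynomial σ A ⧸ F) →ₗ[A] A ⧸ I :=
  ((F.restrictScalars A).liftQ (I.mkQ ∘ₗ lcoeff A ν)
    fun _ hp => (Submodule.Quotient.mk_eq_zero I).mpr
      (coeff_mem_of_mem_map_C_sup_pow_idealOfVars (hF hp) hν)) ∘ₗ
    (Submodule.Quotient.restrictScalarsEquiv A _).symm.toLinearMap

theorem quotCoeff_mk {I : Ideal A} {n : ℕ} {F : Ideal (MvPolynomial σ A)}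
    (hF : F ≤ I.map C ⊔ idealOfVars σ A ^ n) (ν : σ →₀ ℕ) (hν : degree ν < n)
    (p : MvPolynomial σ A) :
    quotCoeff hF ν hν (Submodule.Quotient.mk p) = Submodule.Quotient.mk (coeff ν p) :=
  rfl

theorem quotTensorQuotMul_injective {I I' : Ideal A} {j : ℕ} {F : Ideal (MvPolynomial σ A)}
    (hF : F ≤ I'.map C ⊔ idealOfVars σ A ^ (j + 1))
    (h₁ : ∀ a ∈ I', ∀ d ∈ idealOfVars σ A ^ j, algebraMap A _ a * d ∈ F)
    (h₂ : ∀ a ∈ I, ∀ d ∈ idealOfVars σ A ^ (j + 1), algebraMap A _ a * d ∈ F) :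
    Function.Injective (quotTensorQuotMul h₁ h₂) := by
  classical
  let e := (LinearEquiv.ofBijective _ (powIdealOfVarsQuotToCoeffs_bijective (σ := σ) (A := A) j)
    ).lTensor (I ⧸ Submodule.comap I.subtype I') ≪≫ₗ TensorProduct.finsuppScalarRight A A _ _
  let ι : (I ⧸ Submodule.comap I.subtype I') →ₗ[A] A ⧸ I' := Submodule.mapQ _ _ I.subtype le_rfl
  have hι : Function.Injective ι := by
    rw [← LinearMap.ker_eq_bot, Submodule.ker_mapQ, Submodule.mkQ_map_self]
  have key : ∀ ν : {ν : σ →₀ ℕ // degree ν = j},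
      quotCoeff hF ν.1 (ν.2.trans_lt j.lt_succ_self) ∘ₗ quotTensorQuotMul h₁ h₂ =
        ι ∘ₗ Finsupp.lapply ν ∘ₗ e.toLinearMap := by
    intro ν
    refine TensorProduct.ext' fun q r => ?_
    obtain ⟨a, rfl⟩ := Submodule.mkQ_surjective _ q
    obtain ⟨d, rfl⟩ := Submodule.mkQ_surjective _ r
    simp only [LinearMap.comp_apply, quotTensorQuotMul_mk_tmul_mk, quotCoeff_mk, algebraMap_eq,
      coeff_C_mul, Submodule.mkQ_apply, e, LinearEquiv.coe_coe, LinearEquiv.trans_apply,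
      LinearEquiv.lTensor_tmul, LinearEquiv.ofBijective_apply, finsuppScalarRight_apply_tmul_apply,
      Finsupp.lapply_apply, powIdealOfVarsQuotToCoeffs_mk_apply, ι]
    rw [mul_comm, map_smul]
    rfl
  refine (injective_iff_map_eq_zero _).mpr fun t ht => e.injective ?_
  ext ν
  apply hι
  simpa [ht] using (DFunLike.congr_fun (key ν) t).symm

end MvPolynomial

namespace EnvelopeFiltration

open MvPolynomial

variable {A : Type u} [CommRing A] {J : Ideal A} {N : ℕ}

theorem JR_pow (k : ℕ) : JR A J N ^ k = (J ^ k).map C :=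
  (Ideal.map_pow _ _ _).symm

theorem filt_succ (m j : ℕ) :
    filt A J N m (j + 1) = filt A J N m j ⊔ (J ^ (m - j)).map C * Δ A N ^ j := by
  rw [filt, filt, Finset.sum_range_succ, JR_pow, add_right_comm, Ideal.add_eq_sup]

theorem C_mul_mem_filt {m j k l : ℕ} (hkl : m + 1 ≤ k + l) {a : A} (ha : a ∈ J ^ k)
    {d : MvPolynomial (Fin N) A} (hd : d ∈ Δ A N ^ l) : C a * d ∈ filt A J N m j := by
  refine Ideal.mem_sup_right (Ideal.pow_le_pow_right hkl ?_)
  rw [pow_add]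
  refine Ideal.mul_mem_mul (Ideal.pow_right_mono le_sup_left k ?_)
    (Ideal.pow_right_mono le_sup_right l hd)
  rw [JR_pow]
  exact Ideal.mem_map_of_mem C ha

theorem filt_le {m j : ℕ} (hjm : j ≤ m) :
    filt A J N m j ≤ (J ^ (m - j + 1)).map C ⊔ Δ A N ^ (j + 1) := by
  rw [filt, ← JR_pow, Ideal.add_eq_sup]
  refine sup_le ?_ ?_
  · rw [Ideal.sum_eq_sup]
    refine Finset.sup_le fun i hi => Ideal.mul_le_left.trans
      ((Ideal.pow_le_pow_right ?_).trans le_sup_left)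
    have := Finset.mem_range.mp hi
    omega
  · rw [𝔍, Ideal.add_eq_sup, show m + 1 = m - j + j + 1 by omega]
    exact Ideal.sup_pow_add_add_one_le _ _ _ _

end EnvelopeFiltration

open EnvelopeFiltration in
/-- Let `A` be a commutative ring, `J ⊆ A` an ideal, `N ∈ ℕ`,
`R = A[X_1, …, X_N]`, `Δ = (X_1, …, X_N)` and `𝔍 = J·R + Δ`.  For `0 ≤ j ≤ m`,
multiplication in `R` induces a well-defined `A`-linear map
`(J^{m-j}/J^{m-j+1}) ⊗_A (Δ^j/Δ^{j+1}) →
  (J^m·R + ⋯ + J^{m-j}·Δ^j + 𝔍^{m+1}) / (J^m·R + ⋯ + J^{m-j+1}·Δ^{j-1} + 𝔍^{m+1})`,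
and this map is an isomorphism of `A`-modules (formalized as: the induced `A`-linear map
to `R ⧸ (J^m·R + ⋯ + J^{m-j+1}·Δ^{j-1} + 𝔍^{m+1})` is injective with image exactly the
image of `J^m·R + ⋯ + J^{m-j}·Δ^j + 𝔍^{m+1}`). -/
theorem envelope_filtration_graded_piece
    (A : Type u) [CommRing A] (J : Ideal A) (N : ℕ) (j m : ℕ) (hjm : j ≤ m) :
    ∃ φ : ((J ^ (m - j) : Ideal A) ⧸
            Submodule.comap (J ^ (m - j) : Ideal A).subtype (J ^ (m - j + 1) : Ideal A))
          ⊗[A]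
          ((Δ A N ^ j : Ideal (MvPolynomial (Fin N) A)) ⧸
            Submodule.comap (Δ A N ^ j : Ideal (MvPolynomial (Fin N) A)).subtype
              (Δ A N ^ (j + 1) : Ideal (MvPolynomial (Fin N) A)))
        →ₗ[A] (MvPolynomial (Fin N) A ⧸ filt A J N m j),
      (∀ (a : A) (ha : a ∈ J ^ (m - j))
          (d : MvPolynomial (Fin N) A) (hd : d ∈ Δ A N ^ j),
        φ ((Submodule.Quotient.mk
              (p := Submodule.comap (J ^ (m - j) : Ideal A).subtype (J ^ (m - j + 1) : Ideal A))
              ⟨a, ha⟩) ⊗ₜ[A]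
            (Submodule.Quotient.mk
              (p := Submodule.comap (Δ A N ^ j : Ideal (MvPolynomial (Fin N) A)).subtype
                (Δ A N ^ (j + 1) : Ideal (MvPolynomial (Fin N) A)))
              ⟨d, hd⟩)) =
          Submodule.Quotient.mk (MvPolynomial.C a * d)) ∧
      Function.Injective φ ∧
      LinearMap.range φ =
        Submodule.map ((filt A J N m j).mkQ.restrictScalars A)
          ((filt A J N m (j + 1)).restrictScalars A) := by
  have h₁ : ∀ a ∈ J ^ (m - j + 1), ∀ d ∈ Δ A N ^ j, algebraMap A _ a * d ∈ filt A J N m j :=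
    fun _ ha _ hd => C_mul_mem_filt (by omega) ha hd
  have h₂ : ∀ a ∈ J ^ (m - j), ∀ d ∈ Δ A N ^ (j + 1), algebraMap A _ a * d ∈ filt A J N m j :=
    fun _ ha _ hd => C_mul_mem_filt (by omega) ha hd
  refine ⟨quotTensorQuotMul h₁ h₂, fun _ _ _ _ => rfl,
    MvPolynomial.quotTensorQuotMul_injective (filt_le hjm) h₁ h₂, ?_⟩
  rw [range_quotTensorQuotMul, MvPolynomial.algebraMap_eq, filt_succ]
end
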